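/- arXiv:1407.7103 — 2 statements merged into one kernel-verified Lean document; each statement's English description precedes it below -/
import Mathlib

section
/- Let S1, S2, V1, V2, X1, X2, X3, W, Y be discrete random variables with joint distribution factorizing as p(s1,s2,w) p(v1) p(x1|s1,v1) p(v2) p(x2|s2,v2) p(x3|v1,v2) p(y|x1,x2,x3). Then H(S1, V1, X1, X3 | S2, V2, X2, W, Y) − H(V1, X1, X3 | S1, V2) = H(S1 | S2, W) − I(X1, X3; Y | S2, V2, X2, W). -/
open scoped BigOperators

set_option synthInstance.maxSize 8192

noncomputable section

/-- Probability that the random variable `X` equals `x`, under pmf `p` on finite `Ω`. -/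
def prEq {Ω α : Type*} [Fintype Ω] [DecidableEq α] (p : Ω → ℝ) (X : Ω → α) (x : α) : ℝ :=
  ∑ ω : Ω, if X ω = x then p ω else 0

/-- Shannon entropy (base 2) of a discrete random variable. -/
def entH {Ω α : Type*} [Fintype Ω] [Fintype α] [DecidableEq α] (p : Ω → ℝ) (X : Ω → α) : ℝ :=
  -∑ x : α, prEq p X x * Real.logb 2 (prEq p X x)

/-- Conditional entropy `H(X | Y)`. -/
def condH {Ω α β : Type*} [Fintype Ω] [Fintype α] [DecidableEq α] [Fintype β] [DecidableEq β]
    (p : Ω → ℝ) (X : Ω → α) (Y : Ω → β) : ℝ :=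
  entH p (fun ω => (X ω, Y ω)) - entH p Y

/-- Conditional mutual information `I(X ; Y | Z)`. -/
def condMI {Ω α β γ : Type*} [Fintype Ω] [Fintype α] [DecidableEq α] [Fintype β] [DecidableEq β]
    [Fintype γ] [DecidableEq γ] (p : Ω → ℝ) (X : Ω → α) (Y : Ω → β) (Z : Ω → γ) : ℝ :=
  condH p X Z + condH p Y Z - condH p (fun ω => (X ω, Y ω)) Z

/-- (Unconditional) mutual information `I(X ; Y)`. -/
def mi2 {Ω α β : Type*} [Fintype Ω] [Fintype α] [DecidableEq α] [Fintype β] [DecidableEq β]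
    (p : Ω → ℝ) (X : Ω → α) (Y : Ω → β) : ℝ :=
  entH p X + entH p Y - entH p (fun ω => (X ω, Y ω))

/-- `p` is a probability mass function on `Ω`. -/
def IsPMF {Ω : Type*} [Fintype Ω] (p : Ω → ℝ) : Prop :=
  (∀ ω, 0 ≤ p ω) ∧ ∑ ω : Ω, p ω = 1

/-- The Markov chain `A ↔ B ↔ C`: `A` and `C` are conditionally independent given `B`. -/
def MarkovChain {Ω α β γ : Type*} [Fintype Ω] [DecidableEq α] [DecidableEq β] [DecidableEq γ]
    (p : Ω → ℝ) (A : Ω → α) (B : Ω → β) (C : Ω → γ) : Prop :=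
  ∀ a b c, prEq p (fun ω => (A ω, B ω, C ω)) (a, b, c) * prEq p B b
    = prEq p (fun ω => (A ω, B ω)) (a, b) * prEq p (fun ω => (B ω, C ω)) (b, c)

/-- Hirschfeld–Gebelein–Rényi maximal correlation of `X` and `Y`
(with the convention `sSup ∅ = 0` in `ℝ`). -/
def maxCorr {Ω α β : Type*} [Fintype Ω] (p : Ω → ℝ) (X : Ω → α) (Y : Ω → β) : ℝ :=
  sSup {r : ℝ | ∃ f : α → ℝ, ∃ g : β → ℝ,
    (∑ ω : Ω, p ω * f (X ω)) = 0 ∧ (∑ ω : Ω, p ω * g (Y ω)) = 0 ∧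
    (∑ ω : Ω, p ω * (f (X ω)) ^ 2) = 1 ∧ (∑ ω : Ω, p ω * (g (Y ω)) ^ 2) = 1 ∧
    r = ∑ ω : Ω, p ω * f (X ω) * g (Y ω)}


/-!
The identity is linear bookkeeping once three conditional independences forced by the
factorization are known: `Y` is independent of `(S1, V1)` given `(X1, X3, S2, V2, X2, W)`,
`(V1, X1, X3)` of `(S2, X2, W)` given `(S1, V2)`, and `S1` of `(V2, X2)` given `(S2, W)`.
Each holds because the relevant joint law has the form `f(a, b) g(b, c)`. Writing the entropy
of `X` as the expectation of `-log P(X = X ω)`, a Markov chain `A ↔ B ↔ C` gives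
`H(A,B,C) + H(B) = H(A,B) + H(B,C)` pointwise in `ω`, and tuples that carry the same
information have the same entropy.
-/

open Finset

section Entropy

variable {Ω α β γ : Type*} [Fintype Ω] [DecidableEq α] [DecidableEq β] [DecidableEq γ]

theorem prEq_map [Fintype α] (p : Ω → ℝ) (X : Ω → α) (F : α → β) (b : β) :
    prEq p (fun ω => F (X ω)) b = ∑ a, if F a = b then prEq p X a else 0 := by
  simp only [prEq, ite_sum_zero]
  rw [sum_comm]
  refine sum_congr rfl fun ω _ => ?_
  rw [Fintype.sum_eq_single (X ω) fun a ha => by simp [Ne.symm ha]]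
  simp

theorem prEq_self_pos {p : Ω → ℝ} (hp : ∀ ω, 0 ≤ p ω) (X : Ω → α) {ω : Ω} (hω : 0 < p ω) :
    0 < prEq p X (X ω) :=
  hω.trans_le <| by
    unfold prEq
    simpa using single_le_sum (f := fun ω' => if X ω' = X ω then p ω' else 0)
      (fun ω' _ => by split_ifs <;> simp [hp ω']) (mem_univ ω)

theorem MarkovChain.of_factorization [Fintype α] [Fintype β] [Fintype γ] {p : Ω → ℝ}
    {A : Ω → α} {B : Ω → β} {C : Ω → γ} (f : α → β → ℝ) (g : β → γ → ℝ)
    (h : ∀ a b c, prEq p (fun ω => (A ω, B ω, C ω)) (a, b, c) = f a b * g b c) :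
    MarkovChain p A B C := by
  intro a b c
  have hAB := prEq_map p (fun ω => (A ω, B ω, C ω)) (fun t => (t.1, t.2.1)) (a, b)
  have hBC := prEq_map p (fun ω => (A ω, B ω, C ω)) (fun t => t.2) (b, c)
  have hB := prEq_map p (fun ω => (A ω, B ω, C ω)) (fun t => t.2.1) b
  simp only [Fintype.sum_prod_type, Prod.mk.injEq, ite_and, h] at hAB hBC hB
  simp only [sum_ite_eq', mem_univ, if_true, sum_ite_irrel, sum_const_zero] at hAB hBC hB
  rw [hAB, hBC, hB, h, ← mul_sum, ← sum_mul, ← sum_mul_sum]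
  ring

theorem entH_eq_neg_sum_logb [Fintype α] (p : Ω → ℝ) (X : Ω → α) :
    entH p X = -∑ ω, p ω * Real.logb 2 (prEq p X (X ω)) := by
  simp only [entH, prEq, sum_mul, ite_mul, zero_mul]
  rw [sum_comm]
  simp

theorem entH_congr [Fintype α] [Fintype β] (p : Ω → ℝ) {X : Ω → α} {Y : Ω → β}
    (h : ∀ ω ω', X ω' = X ω ↔ Y ω' = Y ω) : entH p X = entH p Y := by
  have hpr : ∀ ω, prEq p X (X ω) = prEq p Y (Y ω) := fun ω =>
    sum_congr rfl fun ω' _ => if_congr (h ω ω') rfl rfl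
  simp only [entH_eq_neg_sum_logb, hpr]

theorem MarkovChain.entH_add [Fintype α] [Fintype β] [Fintype γ] {p : Ω → ℝ}
    (hp : ∀ ω, 0 ≤ p ω) {A : Ω → α} {B : Ω → β} {C : Ω → γ} (h : MarkovChain p A B C) :
    entH p (fun ω => (A ω, B ω, C ω)) + entH p B
      = entH p (fun ω => (A ω, B ω)) + entH p (fun ω => (B ω, C ω)) := by
  have key : ∀ ω, p ω * Real.logb 2 (prEq p (fun ω => (A ω, B ω, C ω)) (A ω, B ω, C ω))
        + p ω * Real.logb 2 (prEq p B (B ω))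
      = p ω * Real.logb 2 (prEq p (fun ω => (A ω, B ω)) (A ω, B ω))
        + p ω * Real.logb 2 (prEq p (fun ω => (B ω, C ω)) (B ω, C ω)) := by
    intro ω
    rcases (hp ω).eq_or_lt with h0 | hω
    · simp [← h0]
    have hABC := prEq_self_pos hp (fun ω => (A ω, B ω, C ω)) hω
    have hB := prEq_self_pos hp B hω
    have hAB := prEq_self_pos hp (fun ω => (A ω, B ω)) hω
    have hBC := prEq_self_pos hp (fun ω => (B ω, C ω)) hω
    rw [← mul_add, ← mul_add, ← Real.logb_mul hABC.ne' hB.ne', ← Real.logb_mul hAB.ne' hBC.ne',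
      h]
  have hsum := sum_congr rfl fun ω (_ : ω ∈ univ) => key ω
  simp only [sum_add_distrib] at hsum
  simp only [entH_eq_neg_sum_logb]
  linarith

end Entropy

section Identity

variable {Ω S1t S2t Wt V1t V2t X1t X2t X3t Yt : Type*} [Fintype Ω]
    [Fintype S1t] [DecidableEq S1t] [Fintype S2t] [DecidableEq S2t]
    [Fintype Wt] [DecidableEq Wt] [Fintype V1t] [DecidableEq V1t]
    [Fintype V2t] [DecidableEq V2t] [Fintype X1t] [DecidableEq X1t]
    [Fintype X2t] [DecidableEq X2t] [Fintype X3t] [DecidableEq X3t]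
    [Fintype Yt] [DecidableEq Yt] {p : Ω → ℝ}
    {S1 : Ω → S1t} {S2 : Ω → S2t} {W : Ω → Wt} {V1 : Ω → V1t} {V2 : Ω → V2t}
    {X1 : Ω → X1t} {X2 : Ω → X2t} {X3 : Ω → X3t} {Y : Ω → Yt}

theorem condH_sub_condH_eq_of_markovChain (hp : ∀ ω, 0 ≤ p ω)
    (hY : MarkovChain p (fun ω => (S1 ω, V1 ω))
      (fun ω => ((X1 ω, X3 ω), (S2 ω, V2 ω, X2 ω, W ω))) Y)
    (hSX : MarkovChain p (fun ω => (V1 ω, X1 ω, X3 ω)) (fun ω => (S1 ω, V2 ω))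
      (fun ω => (S2 ω, X2 ω, W ω)))
    (hS : MarkovChain p S1 (fun ω => (S2 ω, W ω)) (fun ω => (V2 ω, X2 ω))) :
    condH p (fun ω => (S1 ω, V1 ω, X1 ω, X3 ω))
        (fun ω => (S2 ω, V2 ω, X2 ω, W ω, Y ω))
      - condH p (fun ω => (V1 ω, X1 ω, X3 ω)) (fun ω => (S1 ω, V2 ω))
    = condH p S1 (fun ω => (S2 ω, W ω))
      - condMI p (fun ω => (X1 ω, X3 ω)) Y (fun ω => (S2 ω, V2 ω, X2 ω, W ω)) := by
  have r₁ : entH p (fun ω => ((S1 ω, V1 ω, X1 ω, X3 ω), (S2 ω, V2 ω, X2 ω, W ω, Y ω)))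
      = entH p (fun ω => ((S1 ω, V1 ω), ((X1 ω, X3 ω), (S2 ω, V2 ω, X2 ω, W ω)), Y ω)) :=
    entH_congr p fun _ _ => by simp only [Prod.mk.injEq]; tauto
  have r₂ : entH p (fun ω => (((X1 ω, X3 ω), Y ω), (S2 ω, V2 ω, X2 ω, W ω)))
      = entH p (fun ω => (((X1 ω, X3 ω), (S2 ω, V2 ω, X2 ω, W ω)), Y ω)) :=
    entH_congr p fun _ _ => by simp only [Prod.mk.injEq]; tauto
  have r₃ : entH p (fun ω => ((S1 ω, V1 ω), ((X1 ω, X3 ω), (S2 ω, V2 ω, X2 ω, W ω))))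
      = entH p (fun ω => ((V1 ω, X1 ω, X3 ω), (S1 ω, V2 ω), (S2 ω, X2 ω, W ω))) :=
    entH_congr p fun _ _ => by simp only [Prod.mk.injEq]; tauto
  have r₄ : entH p (fun ω => ((S1 ω, V2 ω), (S2 ω, X2 ω, W ω)))
      = entH p (fun ω => (S1 ω, (S2 ω, W ω), (V2 ω, X2 ω))) :=
    entH_congr p fun _ _ => by simp only [Prod.mk.injEq]; tauto
  have r₅ : entH p (fun ω => (S2 ω, V2 ω, X2 ω, W ω))
      = entH p (fun ω => ((S2 ω, W ω), (V2 ω, X2 ω))) :=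
    entH_congr p fun _ _ => by simp only [Prod.mk.injEq]; tauto
  have r₆ : entH p (fun ω => (Y ω, (S2 ω, V2 ω, X2 ω, W ω)))
      = entH p (fun ω => (S2 ω, V2 ω, X2 ω, W ω, Y ω)) :=
    entH_congr p fun _ _ => by simp only [Prod.mk.injEq]; tauto
  simp only [condH, condMI]
  linarith [hY.entH_add hp, hSX.entH_add hp, hS.entH_add hp]

end Identity

theorem stmt3_general {Ω S1t S2t Wt V1t V2t X1t X2t X3t Yt : Type*} [Fintype Ω]
    [Fintype S1t] [DecidableEq S1t] [Fintype S2t] [DecidableEq S2t]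
    [Fintype Wt] [DecidableEq Wt] [Fintype V1t] [DecidableEq V1t]
    [Fintype V2t] [DecidableEq V2t] [Fintype X1t] [DecidableEq X1t]
    [Fintype X2t] [DecidableEq X2t] [Fintype X3t] [DecidableEq X3t]
    [Fintype Yt] [DecidableEq Yt]
    (p : Ω → ℝ) (hp : IsPMF p)
    (S1 : Ω → S1t) (S2 : Ω → S2t) (W : Ω → Wt) (V1 : Ω → V1t) (V2 : Ω → V2t)
    (X1 : Ω → X1t) (X2 : Ω → X2t) (X3 : Ω → X3t) (Y : Ω → Yt)
    (pS : S1t → S2t → Wt → ℝ) (pV1 : V1t → ℝ) (pX1 : X1t → S1t → V1t → ℝ)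
    (pV2 : V2t → ℝ) (pX2 : X2t → S2t → V2t → ℝ) (pX3 : X3t → V1t → V2t → ℝ)
    (pY : Yt → X1t → X2t → X3t → ℝ)
    (hV11 : ∑ v1 : V1t, pV1 v1 = 1)
    (hX11 : ∀ s1 v1, ∑ x1 : X1t, pX1 x1 s1 v1 = 1)
    (hX31 : ∀ v1 v2, ∑ x3 : X3t, pX3 x3 v1 v2 = 1)
    (hY1 : ∀ x1 x2 x3, ∑ y : Yt, pY y x1 x2 x3 = 1)
    (hfac : ∀ s1 s2 w v1 v2 x1 x2 x3 y,
      prEq p (fun ω => (S1 ω, S2 ω, W ω, V1 ω, V2 ω, X1 ω, X2 ω, X3 ω, Y ω))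
          (s1, s2, w, v1, v2, x1, x2, x3, y)
        = pS s1 s2 w * pV1 v1 * pX1 x1 s1 v1 * pV2 v2 * pX2 x2 s2 v2
            * pX3 x3 v1 v2 * pY y x1 x2 x3) :
    condH p (fun ω => (S1 ω, V1 ω, X1 ω, X3 ω))
        (fun ω => (S2 ω, V2 ω, X2 ω, W ω, Y ω))
      - condH p (fun ω => (V1 ω, X1 ω, X3 ω)) (fun ω => (S1 ω, V2 ω))
    = condH p S1 (fun ω => (S2 ω, W ω))
      - condMI p (fun ω => (X1 ω, X3 ω)) Y (fun ω => (S2 ω, V2 ω, X2 ω, W ω)) := by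
  set J := fun ω => (S1 ω, S2 ω, W ω, V1 ω, V2 ω, X1 ω, X2 ω, X3 ω, Y ω)
  refine condH_sub_condH_eq_of_markovChain hp.1 ?_ ?_ ?_
  · refine .of_factorization
      (fun (s1, v1) ((x1, x3), (s2, v2, x2, w)) =>
        pS s1 s2 w * pV1 v1 * pX1 x1 s1 v1 * pV2 v2 * pX2 x2 s2 v2 * pX3 x3 v1 v2)
      (fun ((x1, x3), (_, _, x2, _)) y => pY y x1 x2 x3)
      fun ⟨s1, v1⟩ ⟨⟨x1, x3⟩, s2, v2, x2, w⟩ y =>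
        (prEq_map p J (fun (s1, s2, w, v1, v2, x1, x2, x3, y) =>
          ((s1, v1), ((x1, x3), (s2, v2, x2, w)), y)) _).trans ?_
    simp only [Fintype.sum_prod_type, hfac, Prod.mk.injEq, ite_and, sum_ite_eq', mem_univ,
      if_true, sum_ite_irrel, sum_const_zero]
  · refine .of_factorization
      (fun (v1, x1, x3) (s1, v2) => pV1 v1 * pX1 x1 s1 v1 * pX3 x3 v1 v2)
      (fun (s1, v2) (s2, x2, w) => pS s1 s2 w * pV2 v2 * pX2 x2 s2 v2)
      fun ⟨v1, x1, x3⟩ ⟨s1, v2⟩ ⟨s2, x2, w⟩ =>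
        (prEq_map p J (fun (s1, s2, w, v1, v2, x1, x2, x3, _) =>
          ((v1, x1, x3), (s1, v2), (s2, x2, w))) _).trans ?_
    simp only [Fintype.sum_prod_type, hfac, Prod.mk.injEq, ite_and, sum_ite_eq', mem_univ,
      if_true, sum_ite_irrel, sum_const_zero]
    simp only [← mul_sum, hY1, mul_one]
    ring
  · refine .of_factorization (fun s1 (s2, w) => pS s1 s2 w)
      (fun (s2, _) (v2, x2) => pV2 v2 * pX2 x2 s2 v2)
      fun s1 ⟨s2, w⟩ ⟨v2, x2⟩ =>
        (prEq_map p J (fun (s1, s2, w, _, v2, _, x2, _, _) =>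
          (s1, (s2, w), (v2, x2))) _).trans ?_
    simp only [Fintype.sum_prod_type, hfac, Prod.mk.injEq, ite_and, sum_ite_eq', mem_univ,
      if_true, sum_ite_irrel, sum_const_zero]
    simp only [← mul_sum, ← sum_mul, hY1, hX31, hX11, hV11, mul_one]
    ring

theorem stmt3 {Ω S1t S2t Wt V1t V2t X1t X2t X3t Yt : Type*} [Fintype Ω]
    [Fintype S1t] [DecidableEq S1t] [Fintype S2t] [DecidableEq S2t]
    [Fintype Wt] [DecidableEq Wt] [Fintype V1t] [DecidableEq V1t]
    [Fintype V2t] [DecidableEq V2t] [Fintype X1t] [DecidableEq X1t]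
    [Fintype X2t] [DecidableEq X2t] [Fintype X3t] [DecidableEq X3t]
    [Fintype Yt] [DecidableEq Yt]
    (p : Ω → ℝ) (hp : IsPMF p)
    (S1 : Ω → S1t) (S2 : Ω → S2t) (W : Ω → Wt) (V1 : Ω → V1t) (V2 : Ω → V2t)
    (X1 : Ω → X1t) (X2 : Ω → X2t) (X3 : Ω → X3t) (Y : Ω → Yt)
    (pS : S1t → S2t → Wt → ℝ) (pV1 : V1t → ℝ) (pX1 : X1t → S1t → V1t → ℝ)
    (pV2 : V2t → ℝ) (pX2 : X2t → S2t → V2t → ℝ) (pX3 : X3t → V1t → V2t → ℝ)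
    (pY : Yt → X1t → X2t → X3t → ℝ)
    (hS0 : ∀ s1 s2 w, 0 ≤ pS s1 s2 w)
    (hS1 : ∑ s1 : S1t, ∑ s2 : S2t, ∑ w : Wt, pS s1 s2 w = 1)
    (hV10 : ∀ v1, 0 ≤ pV1 v1) (hV11 : ∑ v1 : V1t, pV1 v1 = 1)
    (hX10 : ∀ x1 s1 v1, 0 ≤ pX1 x1 s1 v1)
    (hX11 : ∀ s1 v1, ∑ x1 : X1t, pX1 x1 s1 v1 = 1)
    (hV20 : ∀ v2, 0 ≤ pV2 v2) (hV21 : ∑ v2 : V2t, pV2 v2 = 1)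
    (hX20 : ∀ x2 s2 v2, 0 ≤ pX2 x2 s2 v2)
    (hX21 : ∀ s2 v2, ∑ x2 : X2t, pX2 x2 s2 v2 = 1)
    (hX30 : ∀ x3 v1 v2, 0 ≤ pX3 x3 v1 v2)
    (hX31 : ∀ v1 v2, ∑ x3 : X3t, pX3 x3 v1 v2 = 1)
    (hY0 : ∀ y x1 x2 x3, 0 ≤ pY y x1 x2 x3)
    (hY1 : ∀ x1 x2 x3, ∑ y : Yt, pY y x1 x2 x3 = 1)
    (hfac : ∀ s1 s2 w v1 v2 x1 x2 x3 y,
      prEq p (fun ω => (S1 ω, S2 ω, W ω, V1 ω, V2 ω, X1 ω, X2 ω, X3 ω, Y ω))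
          (s1, s2, w, v1, v2, x1, x2, x3, y)
        = pS s1 s2 w * pV1 v1 * pX1 x1 s1 v1 * pV2 v2 * pX2 x2 s2 v2
            * pX3 x3 v1 v2 * pY y x1 x2 x3) :
    condH p (fun ω => (S1 ω, V1 ω, X1 ω, X3 ω))
        (fun ω => (S2 ω, V2 ω, X2 ω, W ω, Y ω))
      - condH p (fun ω => (V1 ω, X1 ω, X3 ω)) (fun ω => (S1 ω, V2 ω))
    = condH p S1 (fun ω => (S2 ω, W ω))
      - condMI p (fun ω => (X1 ω, X3 ω)) Y (fun ω => (S2 ω, V2 ω, X2 ω, W ω)) :=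
  stmt3_general p hp S1 S2 W V1 V2 X1 X2 X3 Y pS pV1 pX1 pV2 pX2 pX3 pY hV11 hX11 hX31 hY1 hfac
end
end

section
/- Let S1, S2 be finite-alphabet random variables and suppose for some n ≥ 1 that X1 is a (randomized) function of S1^n = (S1,…,S1ₙ) and X2 is a function of S2^n, where (S1ₖ, S2ₖ) are i.i.d. copies of (S1, S2), i.e., the Markov chain X1 ↔ S1^n ↔ S2^n ↔ X2 holds. Then the maximal correlation satisfies ρ*_{X1 X2} ≤ ρ*_{S1 S2}. -/
open scoped BigOperators

set_option synthInstance.maxSize 8192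

noncomputable section

/-!
Call `ρ` a correlation bound for `(X, Y)` under `p` if `E[f(X) g(Y)] ≤ ρ ‖f(X)‖₂ ‖g(Y)‖₂` for all
centred `f, g`; the maximal correlation is the least such `ρ ≥ 0`. Correlation bounds tensorize:
under a product `p ⊗ m`, condition on the first coordinate and split `E[f g]` into the product of
the conditional means plus the mean conditional covariance. Both parts are bounded by `ρ` times
standard deviations, and Cauchy–Schwarz together with the law of total variance recombines them.
Finally, randomized functions `X₁` of `S₁ⁿ` and `X₂` of `S₂ⁿ` only average `f` and `g` over the
channels; this keeps them centred and, by Jensen, does not increase their second moments.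
-/

namespace MaximalCorrelation

open Finset

variable {Ω : Type*} [Fintype Ω]

theorem sum_mul_sqrt_mul_sqrt_le {p a b : Ω → ℝ} (hp : ∀ ω, 0 ≤ p ω) (ha : ∀ ω, 0 ≤ a ω)
    (hb : ∀ ω, 0 ≤ b ω) :
    ∑ ω, p ω * √(a ω) * √(b ω) ≤ √(∑ ω, p ω * a ω) * √(∑ ω, p ω * b ω) := by
  convert Real.sum_sqrt_mul_sqrt_le univ (fun ω => mul_nonneg (hp ω) (ha ω))
    (fun ω => mul_nonneg (hp ω) (hb ω)) using 2 with ω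
  rw [Real.sqrt_mul (hp ω), Real.sqrt_mul (hp ω), mul_mul_mul_comm, Real.mul_self_sqrt (hp ω),
    mul_assoc]

theorem sum_mul_mul_le_sqrt_mul_sqrt {p : Ω → ℝ} (hp : ∀ ω, 0 ≤ p ω) (f g : Ω → ℝ) :
    ∑ ω, p ω * f ω * g ω ≤ √(∑ ω, p ω * f ω ^ 2) * √(∑ ω, p ω * g ω ^ 2) :=
  calc ∑ ω, p ω * f ω * g ω ≤ ∑ ω, p ω * √(f ω ^ 2) * √(g ω ^ 2) := by
        refine sum_le_sum fun ω _ => ?_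
        rw [mul_assoc, mul_assoc, Real.sqrt_sq_eq_abs, Real.sqrt_sq_eq_abs, ← abs_mul]
        exact mul_le_mul_of_nonneg_left (le_abs_self _) (hp ω)
    _ ≤ _ := sum_mul_sqrt_mul_sqrt_le hp (fun ω => sq_nonneg _) (fun ω => sq_nonneg _)

theorem sum_mul_sub_sum_mul_eq_zero {m : Ω → ℝ} (hm : ∑ ω, m ω = 1) (u : Ω → ℝ) :
    ∑ ω, m ω * (u ω - ∑ ω', m ω' * u ω') = 0 := by
  simp only [mul_sub, sum_sub_distrib, ← sum_mul, hm, one_mul, sub_self]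

theorem sum_mul_mul_eq_add {m : Ω → ℝ} (hm : ∑ ω, m ω = 1) (u v : Ω → ℝ) :
    ∑ ω, m ω * u ω * v ω = (∑ ω, m ω * u ω) * (∑ ω, m ω * v ω)
      + ∑ ω, m ω * (u ω - ∑ ω', m ω' * u ω') * (v ω - ∑ ω', m ω' * v ω') := by
  have hterm : ∀ ω, m ω * (u ω - ∑ ω', m ω' * u ω') * (v ω - ∑ ω', m ω' * v ω')
      = m ω * u ω * v ω - (∑ ω', m ω' * u ω') * (m ω * v ω)
        - (∑ ω', m ω' * v ω') * (m ω * u ω) + (∑ ω', m ω' * u ω') * (∑ ω', m ω' * v ω') * m ω :=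
    fun ω => by ring
  simp only [hterm, sum_add_distrib, sum_sub_distrib, ← mul_sum, hm]
  ring

theorem sum_mul_sq_eq_add {m : Ω → ℝ} (hm : ∑ ω, m ω = 1) (u : Ω → ℝ) :
    ∑ ω, m ω * u ω ^ 2 = (∑ ω, m ω * u ω) ^ 2 + ∑ ω, m ω * (u ω - ∑ ω', m ω' * u ω') ^ 2 := by
  simpa only [sq, mul_assoc] using sum_mul_mul_eq_add hm u u

theorem sq_sum_mul_le {m : Ω → ℝ} (hm0 : ∀ ω, 0 ≤ m ω) (hm : ∑ ω, m ω = 1) (u : Ω → ℝ) :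
    (∑ ω, m ω * u ω) ^ 2 ≤ ∑ ω, m ω * u ω ^ 2 := by
  rw [sum_mul_sq_eq_add hm u]
  exact le_add_of_nonneg_right (sum_nonneg fun ω _ => mul_nonneg (hm0 ω) (sq_nonneg _))

theorem sqrt_mul_sqrt_add_sqrt_mul_sqrt_le {a₁ a₂ b₁ b₂ : ℝ} (ha₁ : 0 ≤ a₁) (ha₂ : 0 ≤ a₂)
    (hb₁ : 0 ≤ b₁) (hb₂ : 0 ≤ b₂) :
    √a₁ * √b₁ + √a₂ * √b₂ ≤ √(a₁ + a₂) * √(b₁ + b₂) := by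
  simpa [Fin.sum_univ_two] using Real.sum_sqrt_mul_sqrt_le univ (f := ![a₁, a₂]) (g := ![b₁, b₂])
    (Fin.forall_fin_two.2 ⟨ha₁, ha₂⟩) (Fin.forall_fin_two.2 ⟨hb₁, hb₂⟩)

theorem add_sum_mul_le_mul_sqrt_mul_sqrt {ρ c₁ a₁ b₁ : ℝ} {p a b c : Ω → ℝ} (hρ : 0 ≤ ρ)
    (hp : ∀ ω, 0 ≤ p ω) (ha₁ : 0 ≤ a₁) (hb₁ : 0 ≤ b₁) (ha : ∀ ω, 0 ≤ a ω) (hb : ∀ ω, 0 ≤ b ω)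
    (hc₁ : c₁ ≤ ρ * √a₁ * √b₁) (hc : ∀ ω, c ω ≤ ρ * √(a ω) * √(b ω)) :
    c₁ + ∑ ω, p ω * c ω ≤ ρ * √(a₁ + ∑ ω, p ω * a ω) * √(b₁ + ∑ ω, p ω * b ω) :=
  calc c₁ + ∑ ω, p ω * c ω ≤ ρ * √a₁ * √b₁ + ∑ ω, p ω * (ρ * √(a ω) * √(b ω)) := by
        gcongr with ω
        · exact hp ω
        · exact hc ω
    _ = ρ * (√a₁ * √b₁ + ∑ ω, p ω * √(a ω) * √(b ω)) := by
        rw [mul_add, mul_sum]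
        congr 1
        · ring
        · exact sum_congr rfl fun ω _ => by ring
    _ ≤ ρ * (√a₁ * √b₁ + √(∑ ω, p ω * a ω) * √(∑ ω, p ω * b ω)) := by
        gcongr
        exact sum_mul_sqrt_mul_sqrt_le hp ha hb
    _ ≤ ρ * √(a₁ + ∑ ω, p ω * a ω) * √(b₁ + ∑ ω, p ω * b ω) := by
        rw [mul_assoc]
        gcongr
        exact sqrt_mul_sqrt_add_sqrt_mul_sqrt_le ha₁
          (sum_nonneg fun ω _ => mul_nonneg (hp ω) (ha ω)) hb₁
          (sum_nonneg fun ω _ => mul_nonneg (hp ω) (hb ω))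

variable {α β : Type*}

def IsCorrBound (p : Ω → ℝ) (X : Ω → α) (Y : Ω → β) (ρ : ℝ) : Prop :=
  ∀ (f : α → ℝ) (g : β → ℝ), ∑ ω, p ω * f (X ω) = 0 → ∑ ω, p ω * g (Y ω) = 0 →
    ∑ ω, p ω * f (X ω) * g (Y ω)
      ≤ ρ * √(∑ ω, p ω * f (X ω) ^ 2) * √(∑ ω, p ω * g (Y ω) ^ 2)

section maxCorr

variable {p : Ω → ℝ} {X : Ω → α} {Y : Ω → β}

theorem le_maxCorr (hp : ∀ ω, 0 ≤ p ω) {f : α → ℝ} {g : β → ℝ}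
    (hf : ∑ ω, p ω * f (X ω) = 0) (hg : ∑ ω, p ω * g (Y ω) = 0)
    (hf2 : ∑ ω, p ω * f (X ω) ^ 2 = 1) (hg2 : ∑ ω, p ω * g (Y ω) ^ 2 = 1) :
    ∑ ω, p ω * f (X ω) * g (Y ω) ≤ maxCorr p X Y := by
  refine le_csSup ⟨1, ?_⟩ ⟨f, g, hf, hg, hf2, hg2, rfl⟩
  rintro r ⟨f, g, -, -, hf2, hg2, rfl⟩
  simpa [hf2, hg2] using sum_mul_mul_le_sqrt_mul_sqrt hp (fun ω => f (X ω)) (fun ω => g (Y ω))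

theorem maxCorr_nonneg (hp : ∀ ω, 0 ≤ p ω) : 0 ≤ maxCorr p X Y := by
  by_contra! hneg
  refine hneg.not_ge (Real.sSup_nonneg ?_)
  rintro r ⟨f, g, hf, hg, hf2, hg2, rfl⟩
  have hflip := le_maxCorr (X := X) (Y := Y) (g := fun y => -g y) hp hf (by simp [hg]) hf2
    (by simp [hg2])
  simp only [mul_neg, sum_neg_distrib] at hflip
  linarith

theorem IsCorrBound.maxCorr_le {ρ : ℝ} (h : IsCorrBound p X Y ρ) (hρ : 0 ≤ ρ) :
    maxCorr p X Y ≤ ρ := by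
  refine Real.sSup_le ?_ hρ
  rintro r ⟨f, g, hf, hg, hf2, hg2, rfl⟩
  simpa [hf2, hg2] using h f g hf hg

theorem sum_mul_div_sqrt_sq_eq_one {f : Ω → ℝ} (hp : ∀ ω, 0 ≤ p ω)
    (hf : 0 < √(∑ ω, p ω * f ω ^ 2)) :
    ∑ ω, p ω * (f ω / √(∑ ω', p ω' * f ω' ^ 2)) ^ 2 = 1 := by
  rw [Real.sqrt_pos] at hf
  simp only [div_pow, mul_div_assoc', ← sum_div,
    Real.sq_sqrt (sum_nonneg fun ω _ => mul_nonneg (hp ω) (sq_nonneg (f ω)))]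
  exact div_self hf.ne'

theorem isCorrBound_maxCorr (hp : ∀ ω, 0 ≤ p ω) : IsCorrBound p X Y (maxCorr p X Y) := by
  intro f g hf hg
  set a := √(∑ ω, p ω * f (X ω) ^ 2)
  set b := √(∑ ω, p ω * g (Y ω) ^ 2)
  have hcs : ∑ ω, p ω * f (X ω) * g (Y ω) ≤ a * b :=
    sum_mul_mul_le_sqrt_mul_sqrt hp (fun ω => f (X ω)) (fun ω => g (Y ω))
  rcases (show 0 ≤ a from Real.sqrt_nonneg _).eq_or_lt with ha | ha
  · rw [← ha, zero_mul] at hcs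
    rwa [← ha, mul_zero, zero_mul]
  rcases (show 0 ≤ b from Real.sqrt_nonneg _).eq_or_lt with hb | hb
  · rw [← hb, mul_zero] at hcs
    rwa [← hb, mul_zero]
  have hnorm := le_maxCorr (f := fun x => f x / a) (g := fun y => g y / b) hp
    (by simp only [mul_div_assoc', ← sum_div, hf, zero_div])
    (by simp only [mul_div_assoc', ← sum_div, hg, zero_div])
    (sum_mul_div_sqrt_sq_eq_one hp ha) (sum_mul_div_sqrt_sq_eq_one hp hb)
  have hscale : ∑ ω, p ω * (f (X ω) / a) * (g (Y ω) / b)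
      = (∑ ω, p ω * f (X ω) * g (Y ω)) / (a * b) := by
    rw [sum_div]
    exact sum_congr rfl fun ω _ => by field_simp
  rw [hscale, div_le_iff₀ (mul_pos ha hb)] at hnorm
  linarith

end maxCorr

namespace IsCorrBound

variable {p : Ω → ℝ} {X : Ω → α} {Y : Ω → β} {ρ : ℝ}

theorem comp {α' β' : Type*} (h : IsCorrBound p X Y ρ) (φ : α → α') (ψ : β → β') :
    IsCorrBound p (φ ∘ X) (ψ ∘ Y) ρ :=
  fun f g => h (f ∘ φ) (g ∘ ψ)

theorem comp_equiv {Ω' : Type*} [Fintype Ω'] (h : IsCorrBound p X Y ρ) (e : Ω' ≃ Ω) :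
    IsCorrBound (p ∘ e) (X ∘ e) (Y ∘ e) ρ := by
  intro f g hf hg
  simp only [Function.comp_apply] at hf hg ⊢
  rw [e.sum_comp (fun ω => p ω * f (X ω))] at hf
  rw [e.sum_comp (fun ω => p ω * g (Y ω))] at hg
  rw [e.sum_comp (fun ω => p ω * f (X ω) * g (Y ω)), e.sum_comp (fun ω => p ω * f (X ω) ^ 2),
    e.sum_comp (fun ω => p ω * g (Y ω) ^ 2)]
  exact h f g hf hg

theorem prod {Ω' γ δ : Type*} [Fintype Ω'] {m : Ω' → ℝ} {X' : Ω' → γ} {Y' : Ω' → δ}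
    (hp : IsCorrBound p X Y ρ) (hm : IsCorrBound m X' Y' ρ) (hρ : 0 ≤ ρ)
    (hp0 : ∀ ω, 0 ≤ p ω) (hm0 : ∀ ω', 0 ≤ m ω') (hm1 : ∑ ω', m ω' = 1) :
    IsCorrBound (fun ω : Ω × Ω' => p ω.1 * m ω.2) (fun ω => (X ω.1, X' ω.2))
      (fun ω => (Y ω.1, Y' ω.2)) ρ := by
  intro f g hf hg
  have hiter (u : Ω × Ω' → ℝ) :
      ∑ ω : Ω × Ω', p ω.1 * m ω.2 * u ω = ∑ ω, p ω * ∑ ω', m ω' * u (ω, ω') := by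
    simp only [Fintype.sum_prod_type, mul_sum, mul_assoc]
  have hiter₂ (u v : Ω × Ω' → ℝ) :
      ∑ ω : Ω × Ω', p ω.1 * m ω.2 * u ω * v ω
        = ∑ ω, p ω * ∑ ω', m ω' * u (ω, ω') * v (ω, ω') := by
    simp only [Fintype.sum_prod_type, mul_sum, mul_assoc]
  -- conditional means of `f` and `g` given the first coordinate, and the fluctuations around them
  let A : α → ℝ := fun x => ∑ ω', m ω' * f (x, X' ω')
  let B : β → ℝ := fun y => ∑ ω', m ω' * g (y, Y' ω')
  let F : Ω → γ → ℝ := fun ω x' => f (X ω, x') - A (X ω)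
  let G : Ω → δ → ℝ := fun ω y' => g (Y ω, y') - B (Y ω)
  let a : Ω → ℝ := fun ω => ∑ ω', m ω' * F ω (X' ω') ^ 2
  let b : Ω → ℝ := fun ω => ∑ ω', m ω' * G ω (Y' ω') ^ 2
  have ha : ∀ ω, 0 ≤ a ω := fun ω => sum_nonneg fun ω' _ => mul_nonneg (hm0 ω') (sq_nonneg _)
  have hb : ∀ ω, 0 ≤ b ω := fun ω => sum_nonneg fun ω' _ => mul_nonneg (hm0 ω') (sq_nonneg _)
  have hA : ∑ ω, p ω * A (X ω) = 0 := by rw [← hf, hiter]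
  have hB : ∑ ω, p ω * B (Y ω) = 0 := by rw [← hg, hiter]
  have hA2 : 0 ≤ ∑ ω, p ω * A (X ω) ^ 2 := sum_nonneg fun ω _ => mul_nonneg (hp0 ω) (sq_nonneg _)
  have hB2 : 0 ≤ ∑ ω, p ω * B (Y ω) ^ 2 := sum_nonneg fun ω _ => mul_nonneg (hp0 ω) (sq_nonneg _)
  have hinner (ω : Ω) : ∑ ω', m ω' * F ω (X' ω') * G ω (Y' ω') ≤ ρ * √(a ω) * √(b ω) :=
    hm (F ω) (G ω) (sum_mul_sub_sum_mul_eq_zero hm1 _) (sum_mul_sub_sum_mul_eq_zero hm1 _)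
  have hcov : ∑ ω : Ω × Ω', p ω.1 * m ω.2 * f (X ω.1, X' ω.2) * g (Y ω.1, Y' ω.2)
      = ∑ ω, p ω * A (X ω) * B (Y ω)
        + ∑ ω, p ω * ∑ ω', m ω' * F ω (X' ω') * G ω (Y' ω') := by
    rw [hiter₂ (fun ω => f (X ω.1, X' ω.2)) (fun ω => g (Y ω.1, Y' ω.2)), ← sum_add_distrib]
    refine sum_congr rfl fun ω _ => ?_
    rw [sum_mul_mul_eq_add hm1]
    simp only [A, B, F, G]
    ring
  have hvarf : ∑ ω : Ω × Ω', p ω.1 * m ω.2 * f (X ω.1, X' ω.2) ^ 2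
      = ∑ ω, p ω * A (X ω) ^ 2 + ∑ ω, p ω * a ω := by
    rw [hiter (fun ω => f (X ω.1, X' ω.2) ^ 2), ← sum_add_distrib]
    exact sum_congr rfl fun ω _ => by rw [sum_mul_sq_eq_add hm1, mul_add]
  have hvarg : ∑ ω : Ω × Ω', p ω.1 * m ω.2 * g (Y ω.1, Y' ω.2) ^ 2
      = ∑ ω, p ω * B (Y ω) ^ 2 + ∑ ω, p ω * b ω := by
    rw [hiter (fun ω => g (Y ω.1, Y' ω.2) ^ 2), ← sum_add_distrib]
    exact sum_congr rfl fun ω _ => by rw [sum_mul_sq_eq_add hm1, mul_add]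
  rw [hcov, hvarf, hvarg]
  exact add_sum_mul_le_mul_sqrt_mul_sqrt hρ hp0 hA2 hB2 ha hb (hp A B hA hB) hinner

theorem pi (h : IsCorrBound p X Y ρ) (hρ : 0 ≤ ρ) (hp0 : ∀ ω, 0 ≤ p ω) (hp1 : ∑ ω, p ω = 1)
    (n : ℕ) :
    IsCorrBound (fun s : Fin n → Ω => ∏ k, p (s k)) (fun s k => X (s k)) (fun s k => Y (s k))
      ρ := by
  induction n with
  | zero =>
    intro f g hf _
    simp_all
  | succ n ih =>
    have hP1 : ∑ s : Fin n → Ω, ∏ k, p (s k) = 1 := by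
      rw [← Fintype.prod_sum fun _ : Fin n => p, hp1, prod_const_one]
    have hprod := ((h.prod ih hρ hp0 (fun s => prod_nonneg fun k _ => hp0 (s k)) hP1).comp
      (fun a : α × (Fin n → α) => (Fin.cons a.1 a.2 : Fin (n + 1) → α))
      (fun b : β × (Fin n → β) => (Fin.cons b.1 b.2 : Fin (n + 1) → β))).comp_equiv
      (Fin.consEquiv fun _ => Ω).symm
    convert hprod using 1 <;> funext s
    · exact Fin.prod_univ_succ _
    · exact (Fin.cons_self_tail _).symm
    · exact (Fin.cons_self_tail _).symm

theorem channel {X₁ X₂ : Type*} [Fintype X₁] [Fintype X₂] (h : IsCorrBound p X Y ρ) (hρ : 0 ≤ ρ)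
    (hp0 : ∀ ω, 0 ≤ p ω)
    (K₁ : α → X₁ → ℝ) (hK₁ : ∀ x, (∀ x₁, 0 ≤ K₁ x x₁) ∧ ∑ x₁, K₁ x x₁ = 1)
    (K₂ : β → X₂ → ℝ) (hK₂ : ∀ y, (∀ x₂, 0 ≤ K₂ y x₂) ∧ ∑ x₂, K₂ y x₂ = 1) :
    IsCorrBound (fun ω : Ω × X₁ × X₂ => p ω.1 * K₁ (X ω.1) ω.2.1 * K₂ (Y ω.1) ω.2.2)
      (fun ω => ω.2.1) (fun ω => ω.2.2) ρ := by
  intro f g hf hg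
  have hsum (φ : X₁ → ℝ) (ψ : X₂ → ℝ) :
      ∑ ω : Ω × X₁ × X₂, p ω.1 * K₁ (X ω.1) ω.2.1 * K₂ (Y ω.1) ω.2.2 * φ ω.2.1 * ψ ω.2.2
        = ∑ ω, p ω * (∑ x₁, K₁ (X ω) x₁ * φ x₁) * (∑ x₂, K₂ (Y ω) x₂ * ψ x₂) := by
    rw [Fintype.sum_prod_type]
    refine sum_congr rfl fun ω _ => ?_
    rw [Fintype.sum_prod_type, mul_assoc, sum_mul_sum, mul_sum]
    exact sum_congr rfl fun x₁ _ => by rw [mul_sum]; exact sum_congr rfl fun x₂ _ => by ring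
  have hsum₁ (φ : X₁ → ℝ) :
      ∑ ω : Ω × X₁ × X₂, p ω.1 * K₁ (X ω.1) ω.2.1 * K₂ (Y ω.1) ω.2.2 * φ ω.2.1
        = ∑ ω, p ω * ∑ x₁, K₁ (X ω) x₁ * φ x₁ := by
    simpa [(hK₂ _).2] using hsum φ 1
  have hsum₂ (ψ : X₂ → ℝ) :
      ∑ ω : Ω × X₁ × X₂, p ω.1 * K₁ (X ω.1) ω.2.1 * K₂ (Y ω.1) ω.2.2 * ψ ω.2.2
        = ∑ ω, p ω * ∑ x₂, K₂ (Y ω) x₂ * ψ x₂ := by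
    simpa [(hK₁ _).2] using hsum 1 ψ
  let F : α → ℝ := fun x => ∑ x₁, K₁ x x₁ * f x₁
  let G : β → ℝ := fun y => ∑ x₂, K₂ y x₂ * g x₂
  have hF2 : ∑ ω, p ω * F (X ω) ^ 2 ≤ ∑ ω, p ω * ∑ x₁, K₁ (X ω) x₁ * f x₁ ^ 2 :=
    sum_le_sum fun ω _ => mul_le_mul_of_nonneg_left
      (sq_sum_mul_le (hK₁ _).1 (hK₁ _).2 f) (hp0 ω)
  have hG2 : ∑ ω, p ω * G (Y ω) ^ 2 ≤ ∑ ω, p ω * ∑ x₂, K₂ (Y ω) x₂ * g x₂ ^ 2 :=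
    sum_le_sum fun ω _ => mul_le_mul_of_nonneg_left
      (sq_sum_mul_le (hK₂ _).1 (hK₂ _).2 g) (hp0 ω)
  simp only [hsum, hsum₁, hsum₂] at hf hg ⊢
  calc _ ≤ ρ * √(∑ ω, p ω * F (X ω) ^ 2) * √(∑ ω, p ω * G (Y ω) ^ 2) := h F G hf hg
    _ ≤ _ := by
      gcongr
      · exact hF2.trans_eq (hsum₁ fun x₁ => f x₁ ^ 2).symm
      · exact hG2.trans_eq (hsum₂ fun x₂ => g x₂ ^ 2).symm

end IsCorrBound

end MaximalCorrelation

/-- Kang–Ulukus / Witsenhausen: if `X1` is a randomized function of `S1^n` and `X2` a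
randomized function of `S2^n`, where `(S1ₖ, S2ₖ)` are i.i.d. with joint pmf `q`
(Markov chain `X1 ↔ S1^n ↔ S2^n ↔ X2`), then `ρ*_{X1 X2} ≤ ρ*_{S1 S2}`. -/
theorem stmt12 {α β X1t X2t : Type*} [Fintype α] [Fintype β]
    [Fintype X1t] [Fintype X2t] {n : ℕ}
    (q : α × β → ℝ) (hq : IsPMF q)
    (K1 : (Fin n → α) → X1t → ℝ)
    (hK1 : ∀ s, (∀ x, 0 ≤ K1 s x) ∧ ∑ x : X1t, K1 s x = 1)
    (K2 : (Fin n → β) → X2t → ℝ)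
    (hK2 : ∀ s, (∀ x, 0 ≤ K2 s x) ∧ ∑ x : X2t, K2 s x = 1) :
    maxCorr
        (fun ω : (Fin n → α × β) × X1t × X2t =>
          (∏ k : Fin n, q (ω.1 k)) * K1 (fun k => (ω.1 k).1) ω.2.1
            * K2 (fun k => (ω.1 k).2) ω.2.2)
        (fun ω => ω.2.1) (fun ω => ω.2.2)
      ≤ maxCorr q Prod.fst Prod.snd := by
  have hρ : 0 ≤ maxCorr q Prod.fst Prod.snd := MaximalCorrelation.maxCorr_nonneg hq.1
  have hsources :=
    (MaximalCorrelation.isCorrBound_maxCorr (X := Prod.fst) (Y := Prod.snd) hq.1).pi hρ hq.1 hq.2 n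
  exact (hsources.channel hρ (fun s => Finset.prod_nonneg fun k _ => hq.1 (s k))
    K1 hK1 K2 hK2).maxCorr_le hρ
end
end
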